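/- arXiv:1510.08883 — 5 statements merged into one kernel-verified Lean document; each statement's English description precedes it below -/
import Mathlib

section
/- Let C be a linear code over a finite field F with encoder C: F^k → F^n, let i ∈ [k], and let S ⊆ [n] be a recovery set for x_i. If there exists ℓ ∈ S such that y_ℓ is not uniquely determined by x_i and y|_{S∖{ℓ}} (i.e., there exist x_1, x_2 with (x_1)_i = (x_2)_i, C(x_1) and C(x_2) agreeing on S∖{ℓ} but differing at ℓ), then S∖{ℓ} is also a recovery set for x_i. -/
/-
For a linear code, `S` recovers `x i` iff every message whose codeword vanishes on `S` has
`i`-th coordinate zero. Let `z = x₁ - x₂`: then `z i = 0`, `C z` vanishes on `S \ {ℓ}` and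
`C z ℓ ≠ 0`. If `C w` vanishes on `S \ {ℓ}`, subtracting the multiple of `z` that kills the
`ℓ`-th coordinate gives a message whose codeword vanishes on all of `S`, hence whose `i`-th
coordinate is zero; since `z i = 0`, this coordinate is `w i`.
-/

def IsRecoverySet {σ : Type*} {k n : ℕ}
    (C : (Fin k → σ) → (Fin n → σ)) (i : Fin k) (S : Finset (Fin n)) : Prop :=
  ∀ x₁ x₂ : Fin k → σ, (∀ j ∈ S, C x₁ j = C x₂ j) → x₁ i = x₂ i

theorem isRecoverySet_iff_of_linear {R : Type*} [Ring R] {k n : ℕ}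
    (C : (Fin k → R) →ₗ[R] (Fin n → R)) (i : Fin k) (S : Finset (Fin n)) :
    IsRecoverySet C i S ↔ ∀ x, (∀ j ∈ S, C x j = 0) → x i = 0 := by
  constructor
  · intro hrec x hx
    exact hrec x 0 (by simpa using hx)
  · intro h x₁ x₂ hx
    rw [← sub_eq_zero]
    exact h (x₁ - x₂) fun j hj ↦ by simp [hx j hj]

theorem IsRecoverySet.erase_of_ker_witness {K : Type*} [DivisionRing K] {k n : ℕ}
    {C : (Fin k → K) →ₗ[K] (Fin n → K)} {i : Fin k} {S : Finset (Fin n)} {ℓ : Fin n}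
    (hrec : IsRecoverySet C i S) (z : Fin k → K) (hzi : z i = 0)
    (hzS : ∀ j ∈ S.erase ℓ, C z j = 0) (hzℓ : C z ℓ ≠ 0) :
    IsRecoverySet C i (S.erase ℓ) := by
  rw [isRecoverySet_iff_of_linear] at hrec ⊢
  intro w hw
  set c := C w ℓ * (C z ℓ)⁻¹
  have hvanish : ∀ j ∈ S, C (w - c • z) j = 0 := by
    intro j hj
    rcases eq_or_ne j ℓ with rfl | hne
    · simp [c, inv_mul_cancel_right₀ hzℓ]
    · have hj' := Finset.mem_erase.mpr ⟨hne, hj⟩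
      simp [hw j hj', hzS j hj']
  simpa [hzi] using hrec _ hvanish

theorem stmt_3_general {F : Type*} [Field F] {k n : ℕ}
    (C : (Fin k → F) →ₗ[F] (Fin n → F))
    (i : Fin k) (S : Finset (Fin n)) (ℓ : Fin n)
    (hrec : IsRecoverySet (⇑C) i S)
    (hnotdet : ∃ x₁ x₂ : Fin k → F, x₁ i = x₂ i ∧
      (∀ j ∈ S.erase ℓ, C x₁ j = C x₂ j) ∧ C x₁ ℓ ≠ C x₂ ℓ) :
    IsRecoverySet (⇑C) i (S.erase ℓ) := by
  obtain ⟨x₁, x₂, hi, hS, hℓ⟩ := hnotdet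
  refine hrec.erase_of_ker_witness (x₁ - x₂) (by simp [hi]) (fun j hj ↦ ?_) ?_
  · simp [hS j hj]
  · simpa [sub_eq_zero] using hℓ

/-- If `S` is a recovery set for coordinate `i` of an injective linear code `C`, and
there is `ℓ ∈ S` such that `y ℓ` is not uniquely determined by `x i` and `y` on
`S \ {ℓ}`, then `S \ {ℓ}` is also a recovery set for `x i`. -/
theorem stmt_3 {F : Type*} [Field F] [Fintype F] {k n : ℕ}
    (C : (Fin k → F) →ₗ[F] (Fin n → F)) (hinj : Function.Injective C)
    (i : Fin k) (S : Finset (Fin n)) (ℓ : Fin n) (hℓ : ℓ ∈ S)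
    (hrec : IsRecoverySet (⇑C) i S)
    (hnotdet : ∃ x₁ x₂ : Fin k → F, x₁ i = x₂ i ∧
      (∀ j ∈ S.erase ℓ, C x₁ j = C x₂ j) ∧ C x₁ ℓ ≠ C x₂ ℓ) :
    IsRecoverySet (⇑C) i (S.erase ℓ) :=
  stmt_3_general C i S ℓ hrec hnotdet
end

section
/- Let C be a linear (k,n,r,t) batch code over a finite field F with minimum distance d. Then n ≥ max over integers β with 1 ≤ β ≤ t of (β−1)(⌈k/(rβ−β+1)⌉ − 1) + k + d − 1. -/
def IsBatchCode {σ : Type*} {k n : ℕ}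
    (C : (Fin k → σ) → (Fin n → σ)) (r t : ℕ) : Prop :=
  ∀ f : Fin t → Fin k, ∃ S : Fin t → Finset (Fin n),
    (∀ a b : Fin t, a ≠ b → Disjoint (S a) (S b)) ∧
    (∀ a, (S a).card ≤ r) ∧
    (∀ a, IsRecoverySet C (f a) (S a))

def natCeilDiv (a b : ℕ) : ℕ := (a + b - 1) / b

/-!
Read the rows of a generator matrix as functionals on the message space and attach to a set `T`
of coordinates its rank `rk T` and its excess `#T - rk T`. While `rk T < k`, some coordinate
functional `eᵢ` lies outside the span of the rows in `T`; requesting `i` from the code `β` times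
gives `β` disjoint recovery sets whose rows each span `eᵢ`. Adding them to `T` raises the rank by
at most `rβ - β + 1` and the excess by at least `β - 1`, because every set after the first closes
a dependency. After `⌈k/(rβ-β+1)⌉ - 1` rounds the rank is still below `k`; padding `T` up to rank
`k - 1` keeps its excess, and a nonzero codeword vanishing on the padded set shows that `d` is at
most the number of coordinates outside it.
-/

open Module Submodule Finset

namespace Submodule

variable {K M : Type*} [Field K] [AddCommGroup M] [Module K M] [FiniteDimensional K M]

/-- Writing `e = v + w` with `v ∈ V`, `w ∈ P`, the vector `w` is a nonzero element of `U ⊓ P`. -/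
theorem finrank_sup_add_one_le {U V P : Submodule K M} {e : M} (hVU : V ≤ U) (heU : e ∈ U)
    (heVP : e ∈ V ⊔ P) (heV : e ∉ V) :
    finrank K ↥(U ⊔ P) + 1 ≤ finrank K U + finrank K P := by
  obtain ⟨v, hv, w, hw, rfl⟩ := mem_sup.mp heVP
  have hwU : w ∈ U := by simpa using U.sub_mem heU (hVU hv)
  have hw0 : w ≠ 0 := by rintro rfl; simp [hv] at heV
  have hinf : 0 < finrank K ↥(U ⊓ P) :=
    finrank_pos_iff_exists_ne_zero.mpr ⟨⟨w, hwU, hw⟩, fun h => hw0 (congrArg Subtype.val h)⟩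
  have := finrank_sup_add_finrank_inf_eq U P
  omega

theorem finrank_sup_biSup_add_card_le {ι : Type*} {V : Submodule K M} {P : ι → Submodule K M}
    {e : M} (heV : e ∉ V) {s : Finset ι} (hs : s.Nonempty) (heP : ∀ a ∈ s, e ∈ V ⊔ P a) :
    finrank K ↥(V ⊔ ⨆ a ∈ s, P a) + #s ≤ finrank K V + ∑ a ∈ s, finrank K (P a) + 1 := by
  classical
  induction hs using Finset.Nonempty.cons_induction with
  | singleton a =>
    rw [Finset.iSup_singleton, card_singleton, sum_singleton]
    linarith [finrank_add_le_finrank_add_finrank V (P a)]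
  | cons a s has hs ih =>
    obtain ⟨b, hb⟩ := hs
    have heU : e ∈ V ⊔ ⨆ a ∈ s, P a :=
      sup_le_sup_left (le_biSup P hb) V (heP b (mem_cons_of_mem hb))
    have hstep := finrank_sup_add_one_le le_sup_left heU (heP a (mem_cons_self a s)) heV
    have hsup : V ⊔ ⨆ b ∈ cons a s has, P b = (V ⊔ ⨆ b ∈ s, P b) ⊔ P a := by
      rw [cons_eq_insert, Finset.iSup_insert, sup_comm (P a), sup_assoc]
    rw [hsup, card_cons, sum_cons]
    have := ih fun c hc => heP c (mem_cons_of_mem hc)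
    omega

theorem exists_ne_zero_mem_dualCoannihilator {W : Submodule K (Dual K M)}
    (hW : finrank K W < finrank K M) : ∃ x ∈ W.dualCoannihilator, x ≠ 0 := by
  have := Subspace.finrank_add_finrank_dualCoannihilator_eq W
  obtain ⟨⟨x, hx⟩, hx0⟩ := finrank_pos_iff_exists_ne_zero.mp (by omega :
    0 < finrank K W.dualCoannihilator)
  exact ⟨x, hx, fun h => hx0 (Subtype.ext h)⟩

end Submodule

section RowSpan

variable {F V ι : Type*} [Field F] [AddCommGroup V] [Module F V] (C : V →ₗ[F] ι → F)

/-- The span of the rows indexed by `S` of a generator matrix of `C`, the `j`-th row being the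
functional `x ↦ C x j` on the message space. -/
def rowSpan (S : Set ι) : Submodule F (Dual F V) :=
  span F ((fun j => LinearMap.proj j ∘ₗ C) '' S)

theorem rowSpan_mono {S T : Set ι} (h : S ⊆ T) : rowSpan C S ≤ rowSpan C T :=
  span_mono (Set.image_mono h)

@[simp]
theorem rowSpan_empty : rowSpan C ∅ = ⊥ := by
  simp [rowSpan]

theorem rowSpan_union (S T : Set ι) : rowSpan C (S ∪ T) = rowSpan C S ⊔ rowSpan C T := by
  rw [rowSpan, Set.image_union, span_union, rowSpan, rowSpan]

theorem rowSpan_biUnion {κ : Type*} [DecidableEq ι] (s : Finset κ) (D : κ → Finset ι) :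
    rowSpan C ↑(s.biUnion D) = ⨆ a ∈ s, rowSpan C (D a) := by
  rw [coe_biUnion, rowSpan, Set.image_iUnion₂, span_iUnion₂]
  simp only [rowSpan, mem_coe]

theorem finrank_rowSpan_le_card (S : Finset ι) : finrank F (rowSpan C S) ≤ #S := by
  classical
  rw [rowSpan, ← coe_image]
  exact (finrank_span_finset_le_card _).trans card_image_le

theorem finrank_rowSpan_union_le [FiniteDimensional F V] [DecidableEq ι] (S T : Finset ι) :
    finrank F (rowSpan C ↑(S ∪ T)) ≤ finrank F (rowSpan C S) + #T := by
  rw [coe_union, rowSpan_union]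
  calc finrank F ↥(rowSpan C S ⊔ rowSpan C T)
      ≤ finrank F (rowSpan C S) + finrank F (rowSpan C T) := finrank_add_le_finrank_add_finrank _ _
    _ ≤ finrank F (rowSpan C S) + #T := Nat.add_le_add_left (finrank_rowSpan_le_card C T) _

theorem mem_dualCoannihilator_rowSpan {x : V} {S : Set ι} :
    x ∈ (rowSpan C S).dualCoannihilator ↔ ∀ j ∈ S, C x j = 0 := by
  rw [mem_dualCoannihilator, rowSpan]
  constructor
  · exact fun h j hj => h _ (subset_span ⟨j, hj, rfl⟩)
  · intro h φ hφ
    induction hφ using span_induction with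
    | mem φ hφ => obtain ⟨j, hj, rfl⟩ := hφ; exact h j hj
    | zero => rfl
    | add φ ψ _ _ hφ hψ => simp [hφ, hψ]
    | smul c φ _ hφ => simp [hφ]


theorem exists_ne_zero_forall_apply_eq_zero [FiniteDimensional F V] {S : Set ι}
    (hS : finrank F (rowSpan C S) < finrank F V) : ∃ x ≠ 0, ∀ j ∈ S, C x j = 0 := by
  obtain ⟨x, hx, hx0⟩ := exists_ne_zero_mem_dualCoannihilator hS
  exact ⟨x, hx0, (mem_dualCoannihilator_rowSpan C).mp hx⟩

theorem card_add_le_of_finrank_rowSpan_lt [FiniteDimensional F V] [Fintype ι] [DecidableEq F]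
    {d : ℕ} (hd : ∀ x, x ≠ 0 → d ≤ hammingNorm (C x)) {T : Finset ι}
    (hT : finrank F (rowSpan C T) < finrank F V) : #T + d ≤ Fintype.card ι := by
  classical
  obtain ⟨x, hx0, hxT⟩ := exists_ne_zero_forall_apply_eq_zero C hT
  have hsupp : hammingNorm (C x) ≤ #Tᶜ :=
    card_le_card fun j hj => mem_compl.mpr fun hjT => (mem_filter.mp hj).2 (hxT j hjT)
  have := hd x hx0
  have := card_compl_add_card T
  omega

/-- Pad `T` with `finrank V - 1 - rk T` coordinates outside it: the rank stays below
`finrank V`, so some nonzero codeword vanishes on the padded set. -/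
theorem card_add_finrank_add_le [FiniteDimensional F V] [Fintype ι] [DecidableEq ι]
    [DecidableEq F] (hinj : Function.Injective C) {d : ℕ}
    (hd : ∀ x, x ≠ 0 → d ≤ hammingNorm (C x)) {T : Finset ι}
    (hT : finrank F (rowSpan C T) < finrank F V) :
    #T + finrank F V + d ≤ Fintype.card ι + finrank F (rowSpan C T) + 1 := by
  have hcompl : finrank F V ≤ finrank F (rowSpan C T) + #Tᶜ := by
    by_contra! h
    have hle := finrank_rowSpan_union_le C T Tᶜ
    rw [union_compl, coe_univ] at hle
    obtain ⟨x, hx0, hx⟩ := exists_ne_zero_forall_apply_eq_zero C (hle.trans_lt h)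
    exact hx0 (hinj (funext fun j => by simpa using hx j (Set.mem_univ j)))
  obtain ⟨D, hDT, hD⟩ := exists_subset_card_eq (s := Tᶜ)
    (n := finrank F V - 1 - finrank F (rowSpan C T)) (by omega)
  have hTD := card_add_le_of_finrank_rowSpan_lt C hd
    ((finrank_rowSpan_union_le C T D).trans_lt (by omega))
  rw [card_union_of_disjoint (disjoint_of_subset_right hDT disjoint_compl_right)] at hTD
  omega

/-- Every set `S a` after the first finds `e` already in the span, so it raises the rank by at
most `#(S a \ T) - 1`. -/
theorem finrank_rowSpan_union_biUnion_add_le [FiniteDimensional F V] [DecidableEq ι] {κ : Type*}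
    {T : Finset ι} {S : κ → Finset ι} {s : Finset κ} (hs : s.Nonempty)
    (hdisj : (s : Set κ).PairwiseDisjoint S) {e : Dual F V} (heT : e ∉ rowSpan C T)
    (heS : ∀ a ∈ s, e ∈ rowSpan C (S a)) :
    finrank F (rowSpan C ↑(T ∪ s.biUnion S)) + #s + #T ≤
      finrank F (rowSpan C T) + #(T ∪ s.biUnion S) + 1 := by
  have hunion : T ∪ s.biUnion S = T ∪ s.biUnion (S · \ T) := by
    ext j
    by_cases hjT : j ∈ T <;> simp [hjT]
  have hcard : #(T ∪ s.biUnion (S · \ T)) = #T + ∑ a ∈ s, #(S a \ T) := by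
    rw [card_union_of_disjoint ((disjoint_biUnion_right _ _ _).mpr fun a _ => disjoint_sdiff),
      card_biUnion (hdisj.mono fun a => sdiff_subset)]
  have hspan : rowSpan C ↑(T ∪ s.biUnion (S · \ T)) =
      rowSpan C T ⊔ ⨆ a ∈ s, rowSpan C ↑(S a \ T) := by
    rw [coe_union, rowSpan_union, rowSpan_biUnion]
  have hkey := Submodule.finrank_sup_biSup_add_card_le heT hs fun a ha => by
    rw [← rowSpan_union]
    refine rowSpan_mono C (fun j hj => ?_) (heS a ha)
    by_cases hjT : j ∈ T
    · exact Or.inl hjT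
    · exact Or.inr (mem_sdiff.mpr ⟨hj, hjT⟩)
  have := sum_le_sum fun a (_ : a ∈ s) => finrank_rowSpan_le_card C (S a \ T)
  rw [hunion, hspan, hcard]
  omega

end RowSpan

section BatchCode

variable {F : Type*} [Field F] {k n : ℕ}

theorem IsBatchCode.mono {σ : Type*} {C : (Fin k → σ) → Fin n → σ} {r t β : ℕ}
    (hC : IsBatchCode C r t) (hβt : β ≤ t) : IsBatchCode C r β := by
  intro f
  rcases Nat.eq_zero_or_pos β with rfl | hβ
  · exact ⟨fun _ => ∅, fun a => a.elim0, fun a => a.elim0, fun a => a.elim0⟩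
  obtain ⟨S, hdisj, hcard, hrec⟩ := hC fun a => f ⟨min a (β - 1), by omega⟩
  refine ⟨fun a => S (Fin.castLE hβt a),
    fun a b hab => hdisj _ _ ((Fin.castLE_injective hβt).ne hab), fun a => hcard _, fun a => ?_⟩
  convert hrec (Fin.castLE hβt a) using 2
  ext
  simp only [Fin.val_castLE]
  omega

theorem IsRecoverySet.proj_mem_rowSpan {C : (Fin k → F) →ₗ[F] Fin n → F} {i : Fin k}
    {S : Finset (Fin n)} (h : IsRecoverySet C i S) :
    LinearMap.proj i ∈ rowSpan C S := by
  rw [← Subspace.dualCoannihilator_dualAnnihilator_eq (W := rowSpan C S), mem_dualAnnihilator]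
  intro x hx
  exact h x 0 fun j hj => by simpa using (mem_dualCoannihilator_rowSpan C).mp hx j hj

theorem exists_proj_notMem_of_finrank_lt {W : Submodule F (Dual F (Fin k → F))}
    (hW : finrank F W < k) : ∃ i : Fin k, LinearMap.proj i ∉ W := by
  obtain ⟨x, hx, hx0⟩ := exists_ne_zero_mem_dualCoannihilator
    (by rwa [finrank_fin_fun] : finrank F W < finrank F (Fin k → F))
  obtain ⟨i, hi⟩ := Function.ne_iff.mp hx0
  exact ⟨i, fun hmem => hi ((mem_dualCoannihilator x).mp hx _ hmem)⟩

theorem IsBatchCode.exists_finset_finrank_rowSpan_le {C : (Fin k → F) →ₗ[F] Fin n → F} {r β : ℕ}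
    (hbatch : IsBatchCode C r β) (hβ : 1 ≤ β) (m : ℕ)
    (hm : m * (r * β - β + 1) ≤ k - 1) :
    ∃ T : Finset (Fin n), finrank F (rowSpan C T) ≤ m * (r * β - β + 1) ∧
      finrank F (rowSpan C T) + m * (β - 1) ≤ #T := by
  induction m with
  | zero => exact ⟨∅, by simp⟩
  | succ m ih =>
    simp only [add_one_mul] at hm ⊢
    obtain ⟨T, hrank, hexcess⟩ := ih (by omega)
    obtain ⟨i, hi⟩ := exists_proj_notMem_of_finrank_lt (hrank.trans_lt (by omega))
    obtain ⟨S, hdisj, hcard, hrec⟩ := hbatch fun _ => i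
    have hround := finrank_rowSpan_union_biUnion_add_le C ⟨⟨0, hβ⟩, mem_univ _⟩
      (fun a _ b _ hab => hdisj a b hab) hi fun a _ => (hrec a).proj_mem_rowSpan
    have hsize : #(T ∪ univ.biUnion S) ≤ #T + β * r := by
      refine (card_union_le _ _).trans (Nat.add_le_add_left ?_ _)
      simpa using card_biUnion_le_card_mul univ S r fun a _ => hcard a
    rw [card_univ, Fintype.card_fin] at hround
    have hcomm : β * r = r * β := mul_comm β r
    exact ⟨T ∪ univ.biUnion S, by omega, by omega⟩

end BatchCode

theorem natCeilDiv_sub_one_mul_le (a b : ℕ) : (natCeilDiv a b - 1) * b ≤ a - 1 := by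
  have := Nat.div_mul_le_self (a + b - 1) b
  rw [Nat.sub_one_mul, natCeilDiv]
  omega

theorem stmt_6_general {F : Type*} [Field F] [DecidableEq F] {k n r t d : ℕ}
    (hk : 1 ≤ k)
    (C : (Fin k → F) →ₗ[F] (Fin n → F)) (hinj : Function.Injective C)
    (hbatch : IsBatchCode (⇑C) r t)
    (hd_le : ∀ x : Fin k → F, x ≠ 0 → d ≤ hammingNorm (C x)) :
    ∀ β : ℕ, 1 ≤ β → β ≤ t →
      (β - 1) * (natCeilDiv k (r * β - β + 1) - 1) + k + d ≤ n + 1 := by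
  intro β hβ hβt
  have hrounds := natCeilDiv_sub_one_mul_le k (r * β - β + 1)
  obtain ⟨T, hTrank, hTexcess⟩ :=
    (hbatch.mono hβt).exists_finset_finrank_rowSpan_le hβ _ hrounds
  have hfin : finrank F (Fin k → F) = k := finrank_fin_fun F
  have hbound := card_add_finrank_add_le C hinj hd_le (T := T) (by omega)
  rw [Fintype.card_fin, hfin] at hbound
  rw [mul_comm (β - 1)]
  omega

/-- A linear `(k,n,r,t)` batch code with minimum distance `d` satisfies, for every
integer `1 ≤ β ≤ t`, `n ≥ (β−1)(⌈k/(rβ−β+1)⌉ − 1) + k + d − 1`. -/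
theorem stmt_6 {F : Type*} [Field F] [Fintype F] [DecidableEq F] {k n r t d : ℕ}
    (hr : 1 ≤ r) (ht : 1 ≤ t) (hk : 1 ≤ k)
    (C : (Fin k → F) →ₗ[F] (Fin n → F)) (hinj : Function.Injective C)
    (hbatch : IsBatchCode (⇑C) r t)
    (hd_le : ∀ x : Fin k → F, x ≠ 0 → d ≤ hammingNorm (C x))
    (hd_eq : ∃ x : Fin k → F, x ≠ 0 ∧ hammingNorm (C x) = d) :
    ∀ β : ℕ, 1 ≤ β → β ≤ t →
      (β - 1) * (natCeilDiv k (r * β - β + 1) - 1) + k + d ≤ n + 1 :=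
  stmt_6_general hk C hinj hbatch hd_le
end

section
/- For every even k ≥ 2, the linear systematic binary code of length n = k + k/2 encoding x ∈ F_2^k to y with y_i = x_i for 1 ≤ i ≤ k and y_{k+j} = x_{2j−1} + x_{2j} for 1 ≤ j ≤ k/2 is a (k, 3k/2, 2, 2) batch code with minimum distance 2, and it attains the bound n ≥ ⌈k/2⌉ + k + d − 2 with equality. -/
/-!
Every information symbol `x i` can be read in two disjoint ways: at its own systematic
position, or as the parity of its pair minus the systematic symbol of its partner. A request
for two distinct symbols is served by their systematic positions, a repeated request by the two
ways above. Changing `x i` changes its systematic position and, depending on whether the partner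
changes too, either the partner's position or the parity, so the minimum distance is at least `2`;
flipping both symbols of a pair leaves the parity unchanged and attains it.
-/

open Finset

section HammingDist

variable {ι : Type*} [Fintype ι] {β : ι → Type*} [∀ i, DecidableEq (β i)] {x y : ∀ i, β i}
  {s : Finset ι}

theorem card_le_hammingDist (h : ∀ i ∈ s, x i ≠ y i) : #s ≤ hammingDist x y :=
  card_le_card fun i hi ↦ mem_filter.mpr ⟨mem_univ i, h i hi⟩

theorem hammingDist_le_card (h : ∀ i ∉ s, x i = y i) : hammingDist x y ≤ #s :=
  card_le_card fun i hi ↦ by_contra fun his ↦ (mem_filter.mp hi).2 (h i his)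

theorem two_le_hammingDist_of_ne {i j : ι} (hij : i ≠ j) (hi : x i ≠ y i) (hj : x j ≠ y j) :
    2 ≤ hammingDist x y := by
  classical
  exact card_pair hij ▸ card_le_hammingDist (by simp [hi, hj])

end HammingDist

section BatchCode

variable {σ : Type*} {k n : ℕ} {C : (Fin k → σ) → (Fin n → σ)}

theorem isRecoverySet_singleton {i : Fin k} {p : Fin n} (h : ∀ x, C x p = x i) :
    IsRecoverySet C i {p} := fun x₁ x₂ hx ↦ by
  simpa [h] using hx p (mem_singleton_self p)

theorem isRecoverySet_pair [AddCancelCommMonoid σ] {i j : Fin k} {p q : Fin n}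
    (hp : ∀ x, C x p = x j) (hq : ∀ x, C x q = x i + x j) : IsRecoverySet C i {p, q} :=
  fun x₁ x₂ hx ↦ by
    have hj : x₁ j = x₂ j := by simpa [hp] using hx p (by simp)
    have hij : x₁ i + x₁ j = x₂ i + x₂ j := by simpa [hq] using hx q (by simp)
    exact add_right_cancel (hj ▸ hij)

theorem isBatchCode_two_of_forall_pair {r : ℕ}
    (h : ∀ i j : Fin k, ∃ S T : Finset (Fin n), Disjoint S T ∧ #S ≤ r ∧ #T ≤ r ∧
      IsRecoverySet C i S ∧ IsRecoverySet C j T) :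
    IsBatchCode C r 2 := by
  intro f
  obtain ⟨S, T, hST, hS, hT, hSi, hTj⟩ := h (f 0) (f 1)
  refine ⟨![S, T], ?_, by simp [Fin.forall_fin_two, hS, hT],
    by simp [Fin.forall_fin_two, hSi, hTj]⟩
  simp [Fin.forall_fin_two, hST, hST.symm]

end BatchCode

structure IsPairParityCode {σ : Type*} [Add σ] {k n : ℕ} (C : (Fin k → σ) → (Fin n → σ))
    (sys par : Fin k → Fin n) (partner : Fin k → Fin k) : Prop where
  apply_sys : ∀ x i, C x (sys i) = x i
  apply_par : ∀ x i, C x (par i) = x i + x (partner i)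
  sys_injective : Function.Injective sys
  par_ne_sys : ∀ i j, par i ≠ sys j
  partner_ne : ∀ i, partner i ≠ i

namespace IsPairParityCode

variable {σ : Type*} {k n : ℕ} {C : (Fin k → σ) → (Fin n → σ)} {sys par : Fin k → Fin n}
  {partner : Fin k → Fin k}

theorem isBatchCode [AddCancelCommMonoid σ] (hC : IsPairParityCode C sys par partner) :
    IsBatchCode C 2 2 := by
  classical
  refine isBatchCode_two_of_forall_pair fun i j ↦ ?_
  have hi := isRecoverySet_singleton (hC.apply_sys · i)
  by_cases hij : i = j
  · subst hij
    refine ⟨{sys i}, {sys (partner i), par i}, ?_, by simp, card_le_two, hi,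
      isRecoverySet_pair (hC.apply_sys · _) (hC.apply_par · i)⟩
    simp [hC.sys_injective.ne (hC.partner_ne i).symm, (hC.par_ne_sys i i).symm]
  · exact ⟨{sys i}, {sys j}, by simpa using hC.sys_injective.ne hij, by simp, by simp, hi,
      isRecoverySet_singleton (hC.apply_sys · j)⟩

theorem two_le_hammingDist [AddCancelCommMonoid σ] [DecidableEq σ]
    (hC : IsPairParityCode C sys par partner) {x₁ x₂ : Fin k → σ} (hx : x₁ ≠ x₂) :
    2 ≤ hammingDist (C x₁) (C x₂) := by
  obtain ⟨i, hi⟩ := Function.ne_iff.mp hx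
  have hsys : ∀ j, x₁ j ≠ x₂ j → C x₁ (sys j) ≠ C x₂ (sys j) := by simp [hC.apply_sys]
  by_cases hpartner : x₁ (partner i) = x₂ (partner i)
  · refine two_le_hammingDist_of_ne (hC.par_ne_sys i i).symm (hsys i hi) ?_
    rw [hC.apply_par, hC.apply_par, hpartner]
    exact fun h ↦ hi (add_right_cancel h)
  · exact two_le_hammingDist_of_ne (hC.sys_injective.ne (hC.partner_ne i).symm) (hsys i hi)
      (hsys _ hpartner)

theorem exists_hammingDist_eq_two {C : (Fin k → ZMod 2) → (Fin n → ZMod 2)}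
    (hC : IsPairParityCode C sys par partner) (hpartner : Function.Involutive partner)
    (hcover : ∀ p, (∃ i, sys i = p) ∨ ∃ i, par i = p) (i : Fin k) :
    ∃ x₁ x₂ : Fin k → ZMod 2, x₁ ≠ x₂ ∧ hammingDist (C x₁) (C x₂) = 2 := by
  classical
  let x : Fin k → ZMod 2 := fun j ↦ if j = i ∨ j = partner i then 1 else 0
  have hx : x ≠ 0 := fun h ↦ by simpa [x] using congrFun h i
  refine ⟨0, x, hx.symm, le_antisymm ?_ (hC.two_le_hammingDist hx.symm)⟩
  refine (hammingDist_le_card fun p hp ↦ ?_).trans (card_le_two (a := sys i) (b := sys (partner i)))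
  rcases hcover p with ⟨j, rfl⟩ | ⟨j, rfl⟩
  · simp only [mem_insert, mem_singleton, hC.sys_injective.eq_iff, not_or] at hp
    simp [hC.apply_sys, x, hp.1, hp.2]
  · have hxx : x (partner j) = x j := by
      simp only [x, hpartner.eq_iff, hpartner i, or_comm]
    simp [hC.apply_par, hxx, CharTwo.add_self_eq_zero]

end IsPairParityCode

section EvenPairs

variable {k : ℕ}

theorem two_mul_add_one_lt_of_lt_div_two {j : ℕ} (hj : j < k / 2) : 2 * j + 1 < k := by
  omega

/-- The other member of the pair `{2j, 2j+1}` containing `i` (the paper's pairs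
`{x_{2j-1}, x_{2j}}`, indexed from `0`). -/
def evenPairPartner (hk : k % 2 = 0) (i : Fin k) : Fin k :=
  ⟨2 * (i / 2) + (1 - i % 2), by have := i.isLt; omega⟩

def evenPairParity (hk : k % 2 = 0) (i : Fin k) : Fin (k + k / 2) :=
  Fin.natAdd k ⟨i / 2, by have := i.isLt; omega⟩

theorem evenPairPartner_involutive (hk : k % 2 = 0) : Function.Involutive (evenPairPartner hk) :=
  fun i ↦ Fin.ext (by simp only [evenPairPartner]; omega)

theorem exists_castAdd_or_evenPairParity_eq (hk : k % 2 = 0) (p : Fin (k + k / 2)) :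
    (∃ i, Fin.castAdd (k / 2) i = p) ∨ ∃ i, evenPairParity hk i = p := by
  by_cases hp : p < k
  · exact .inl ⟨⟨p, hp⟩, rfl⟩
  · exact .inr ⟨⟨2 * (p - k), by omega⟩, Fin.ext (by simp [evenPairParity]; omega)⟩

theorem isPairParityCode_evenPair {σ : Type*} [AddCommMagma σ] (hk : k % 2 = 0)
    {C : (Fin k → σ) → (Fin (k + k / 2) → σ)}
    (hsys : ∀ x i, C x (Fin.castAdd (k / 2) i) = x i)
    (hpar : ∀ x (j : Fin (k / 2)), C x (Fin.natAdd k j) =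
      x ⟨2 * j, Nat.lt_of_succ_lt (two_mul_add_one_lt_of_lt_div_two j.isLt)⟩ +
        x ⟨2 * j + 1, two_mul_add_one_lt_of_lt_div_two j.isLt⟩) :
    IsPairParityCode C (Fin.castAdd (k / 2)) (evenPairParity hk) (evenPairPartner hk) where
  apply_sys := hsys
  apply_par x i := by
    rw [evenPairParity, hpar]
    rcases Nat.mod_two_eq_zero_or_one i with h | h
    · congr 1 <;> congr 1 <;> ext <;> simp [evenPairPartner] <;> omega
    · rw [add_comm]
      congr 1 <;> congr 1 <;> ext <;> simp [evenPairPartner] <;> omega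
  sys_injective := Fin.castAdd_injective _ _
  par_ne_sys i j h := by
    have := congrArg Fin.val h
    simp [evenPairParity] at this
    omega
  partner_ne i h := by
    have := congrArg Fin.val h
    simp [evenPairPartner] at this
    omega

end EvenPairs

/-- For even `k ≥ 2`, the systematic binary code of length `n = k + k/2` appending
to `x` the parities `x_{2j−1} + x_{2j}` is a `(k, 3k/2, 2, 2)` batch code with
minimum distance `2`, attaining `n ≥ ⌈k/2⌉ + k + d − 2` with equality. -/
theorem stmt_9 (k : ℕ) (hk : 2 ≤ k) (hke : k % 2 = 0)
    (C : (Fin k → ZMod 2) → (Fin (k + k / 2) → ZMod 2))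
    (hsys : ∀ x : Fin k → ZMod 2, ∀ i : Fin k,
      C x ⟨i.val, by have := i.isLt; omega⟩ = x i)
    (hpar : ∀ x : Fin k → ZMod 2, ∀ j : Fin (k / 2),
      C x ⟨k + j.val, by have := j.isLt; omega⟩ =
        x ⟨2 * j.val, by have := j.isLt; omega⟩ +
        x ⟨2 * j.val + 1, by have := j.isLt; omega⟩) :
    IsBatchCode C 2 2 ∧
    (∀ x₁ x₂ : Fin k → ZMod 2, x₁ ≠ x₂ → 2 ≤ hammingDist (C x₁) (C x₂)) ∧
    (∃ x₁ x₂ : Fin k → ZMod 2, x₁ ≠ x₂ ∧ hammingDist (C x₁) (C x₂) = 2) ∧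
    k + k / 2 = k / 2 + k + 2 - 2 := by
  have hC := isPairParityCode_evenPair hke hsys hpar
  exact ⟨hC.isBatchCode, fun _ _ ↦ hC.two_le_hammingDist,
    hC.exists_hammingDist_eq_two (evenPairPartner_involutive hke)
      (exists_castAdd_or_evenPairParity_eq hke) ⟨0, by omega⟩, by omega⟩
end

section
/- The binary linear code with generator matrix G = [[1,0,0,1,1,0,1],[0,1,0,1,0,1,1],[0,0,1,0,1,1,1]] (the [7,3,4] simplex code) is a systematic (3,7,2,4) batch code with minimum distance 4: any multiset of 4 indices from {1,2,3} can be recovered from pairwise disjoint recovery sets of size at most 2. -/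
/-!
The columns of the generator matrix are the seven nonzero vectors of `𝔽₂³`, so `yⱼ` is the
inner product of `x` with the `j`-th column. Hence `xᵢ` is read off `{i}` and off each pair of
columns summing to `eᵢ`; for each `i` these four recovery sets partition the seven coordinates,
and every request of four indices can be served by pairwise disjoint members of these
partitions (a finite check over the `3⁴` requests). A nonzero `x` is orthogonal to exactly three
nonzero vectors, so every nonzero codeword has weight exactly `4`.
-/

open Finset

def simplexGenerator : Matrix (Fin 3) (Fin 7) (ZMod 2) :=
  !![1,0,0,1,1,0,1; 0,1,0,1,0,1,1; 0,0,1,0,1,1,1]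

def simplexCode (x : Fin 3 → ZMod 2) : Fin 7 → ZMod 2 :=
  Matrix.vecMul x simplexGenerator

def simplexRecoverySets : Fin 3 → Fin 4 → Finset (Fin 7) :=
  ![![{0}, {1, 3}, {2, 4}, {5, 6}],
    ![{1}, {0, 3}, {2, 5}, {4, 6}],
    ![{2}, {0, 4}, {1, 5}, {3, 6}]]

theorem IsRecoverySet.of_sum_eq {σ : Type*} [AddCommMonoid σ] {k n : ℕ}
    {C : (Fin k → σ) → (Fin n → σ)} {i : Fin k} {S : Finset (Fin n)}
    (h : ∀ x, ∑ j ∈ S, C x j = x i) : IsRecoverySet C i S := by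
  intro x₁ x₂ hS
  rw [← h x₁, ← h x₂]
  exact sum_congr rfl hS

theorem IsBatchCode.of_recoverySets {σ : Type*} {k n m : ℕ}
    {C : (Fin k → σ) → (Fin n → σ)} {r t : ℕ} (R : Fin k → Fin m → Finset (Fin n))
    (hR : ∀ i l, IsRecoverySet C i (R i l)) (hcard : ∀ i l, (R i l).card ≤ r)
    (hdisj : ∀ f : Fin t → Fin k, ∃ c : Fin t → Fin m,
      ∀ a b, a ≠ b → Disjoint (R (f a) (c a)) (R (f b) (c b))) :
    IsBatchCode C r t := by
  intro f
  obtain ⟨c, hc⟩ := hdisj f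
  exact ⟨fun a => R (f a) (c a), hc, fun a => hcard _ _, fun a => hR _ _⟩

theorem sum_simplexCode_recoverySet (i : Fin 3) (l : Fin 4) (x : Fin 3 → ZMod 2) :
    ∑ j ∈ simplexRecoverySets i l, simplexCode x j = x i := by
  revert i l x
  decide

theorem card_simplexRecoverySets_le (i : Fin 3) (l : Fin 4) :
    (simplexRecoverySets i l).card ≤ 2 := by
  revert i l
  decide

theorem exists_disjoint_simplexRecoverySets (f : Fin 4 → Fin 3) :
    ∃ c : Fin 4 → Fin 4, ∀ a b, a ≠ b →
      Disjoint (simplexRecoverySets (f a) (c a)) (simplexRecoverySets (f b) (c b)) := by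
  revert f
  decide +kernel

theorem simplexCode_isBatchCode : IsBatchCode simplexCode 2 4 :=
  .of_recoverySets simplexRecoverySets
    (fun i l => .of_sum_eq (sum_simplexCode_recoverySet i l))
    card_simplexRecoverySets_le exists_disjoint_simplexRecoverySets

theorem simplexCode_castLE (x : Fin 3 → ZMod 2) (i : Fin 3) :
    simplexCode x (Fin.castLE (by norm_num) i) = x i := by
  revert x i
  decide

theorem four_le_hammingNorm_simplexCode (x : Fin 3 → ZMod 2) (hx : x ≠ 0) :
    4 ≤ hammingNorm (simplexCode x) := by
  revert x
  decide

theorem hammingNorm_simplexCode_single : hammingNorm (simplexCode (Pi.single 0 1)) = 4 := by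
  decide

/-- The `[7,3,4]` binary simplex code with the given generator matrix is a
systematic `(3,7,2,4)` batch code with minimum distance `4`. -/
theorem stmt_10 :
    let G : Matrix (Fin 3) (Fin 7) (ZMod 2) :=
      !![1,0,0,1,1,0,1; 0,1,0,1,0,1,1; 0,0,1,0,1,1,1]
    let C : (Fin 3 → ZMod 2) → (Fin 7 → ZMod 2) := fun x => Matrix.vecMul x G
    IsBatchCode C 2 4 ∧
    (∀ x : Fin 3 → ZMod 2, ∀ i : Fin 3, C x (Fin.castLE (by norm_num) i) = x i) ∧
    (∀ x : Fin 3 → ZMod 2, x ≠ 0 → 4 ≤ hammingNorm (C x)) ∧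
    (∃ x : Fin 3 → ZMod 2, x ≠ 0 ∧ hammingNorm (C x) = 4) :=
  ⟨simplexCode_isBatchCode, simplexCode_castLE, four_le_hammingNorm_simplexCode,
    Pi.single 0 1, Pi.single_ne_zero_iff.mpr one_ne_zero, hammingNorm_simplexCode_single⟩
end

section
/- Let C be a linear code over F_q of length n', dimension k', and minimum distance d with d > (1 − 1/q)n'. Then q^{k'} · (qd − (q−1)n') ≤ qd (the Plotkin bound). -/
/-!
Count the total Hamming weight `W` of the code `C` in two ways. Every nonzero codeword has
weight at least `d`, so `(|C| - 1) d ≤ W`. On the other hand, evaluation at a coordinate `i` is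
an additive map `C → F` whose kernel therefore has index at most `q`; so at most a fraction
`(q - 1)/q` of the codewords are nonzero at `i`, and summing over the coordinates gives
`q W ≤ (q - 1) n |C|`. Comparing the two bounds is the Plotkin bound; the argument works
verbatim for additive codes over any finite abelian group.
-/

open Finset

theorem AddMonoidHom.card_le_card_ker_mul {G G' : Type*} [AddGroup G] [AddGroup G'] [Finite G']
    (f : G →+ G') : Nat.card G ≤ Nat.card f.ker * Nat.card G' := by
  rw [← f.ker.card_mul_index, AddSubgroup.index_ker]
  exact Nat.mul_le_mul_left _ (Nat.card_le_card_of_injective _ Subtype.val_injective)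

theorem sum_hammingNorm_eq_sum_card_filter {α ι : Type*} [Fintype ι] {β : ι → Type*}
    [∀ i, Zero (β i)] [∀ i, DecidableEq (β i)] (s : Finset α) (v : α → ∀ i, β i) :
    ∑ a ∈ s, hammingNorm (v a) = ∑ i, #{a ∈ s | v a i ≠ 0} := by
  simp only [hammingNorm, card_filter]
  exact sum_comm

namespace AddSubgroup

variable {ι G : Type*} [AddCommGroup G] [DecidableEq G]
  (C : AddSubgroup (ι → G)) [Fintype C]

theorem card_le_card_mul_card_filter_eval_eq_zero [Fintype G] (i : ι) :
    Fintype.card C ≤ Fintype.card G * #{x : C | (x : ι → G) i = 0} := by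
  let f : C →+ G := (Pi.evalAddMonoidHom (fun _ => G) i).comp C.subtype
  have hker : Nat.card f.ker = #{x : C | (x : ι → G) i = 0} := by
    rw [← Fintype.card_subtype, ← Nat.card_eq_fintype_card]
    exact Nat.card_congr (Equiv.subtypeEquivRight fun x => f.mem_ker)
  have hcard := f.card_le_card_ker_mul
  rwa [hker, Nat.card_eq_fintype_card, Nat.card_eq_fintype_card, mul_comm] at hcard

theorem card_mul_card_filter_eval_ne_zero_le [Fintype G] (i : ι) :
    Fintype.card G * #{x : C | (x : ι → G) i ≠ 0}
      ≤ (Fintype.card G - 1) * Fintype.card C := by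
  have hsplit :
      #{x : C | (x : ι → G) i = 0} + #{x : C | (x : ι → G) i ≠ 0} = Fintype.card C :=
    card_filter_add_card_filter_not _
  have hzero := C.card_le_card_mul_card_filter_eval_eq_zero i
  rw [← hsplit] at hzero
  rw [Nat.sub_one_mul, Nat.le_sub_iff_add_le (Nat.le_mul_of_pos_left _ Fintype.card_pos),
    ← hsplit]
  linarith

theorem card_mul_sum_hammingNorm_le [Fintype ι] [Fintype G] :
    Fintype.card G * ∑ x : C, hammingNorm (x : ι → G)
      ≤ (Fintype.card G - 1) * Fintype.card ι * Fintype.card C := by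
  rw [sum_hammingNorm_eq_sum_card_filter, mul_sum]
  calc ∑ i, Fintype.card G * #{x : C | (x : ι → G) i ≠ 0}
      ≤ ∑ _i : ι, (Fintype.card G - 1) * Fintype.card C :=
        sum_le_sum fun i _ => C.card_mul_card_filter_eval_ne_zero_le i
    _ = (Fintype.card G - 1) * Fintype.card ι * Fintype.card C := by
        rw [sum_const, card_univ, smul_eq_mul]
        ring

theorem card_sub_one_mul_le_sum_hammingNorm [Fintype ι] {d : ℕ}
    (hd : ∀ x ∈ C, x ≠ 0 → d ≤ hammingNorm x) :
    (Fintype.card C - 1) * d ≤ ∑ x : C, hammingNorm (x : ι → G) := by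
  rw [← card_univ, ← card_erase_of_mem (mem_univ 0), ← smul_eq_mul]
  calc #(univ.erase (0 : C)) • d ≤ ∑ x ∈ univ.erase (0 : C), hammingNorm (x : ι → G) :=
        card_nsmul_le_sum _ _ _ fun x hx =>
          hd x x.2 fun h => ne_of_mem_erase hx (Subtype.ext h)
    _ ≤ ∑ x : C, hammingNorm (x : ι → G) := sum_le_sum_of_subset (erase_subset _ _)

theorem plotkin_bound [Fintype ι] [Fintype G] {d : ℕ}
    (hd : ∀ x ∈ C, x ≠ 0 → d ≤ hammingNorm x) :
    (Fintype.card C : ℤ) * (Fintype.card G * d - (Fintype.card G - 1) * Fintype.card ι)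
      ≤ Fintype.card G * d := by
  have hweight : Fintype.card G * ((Fintype.card C - 1) * d)
      ≤ (Fintype.card G - 1) * Fintype.card ι * Fintype.card C :=
    (Nat.mul_le_mul_left _ (C.card_sub_one_mul_le_sum_hammingNorm hd)).trans
      C.card_mul_sum_hammingNorm_le
  have hweight' := (Nat.cast_le (α := ℤ)).mpr hweight
  push_cast [Nat.one_le_iff_ne_zero.mpr Fintype.card_ne_zero] at hweight'
  linear_combination hweight'

end AddSubgroup

theorem stmt_16_general {F : Type*} [Field F] [Fintype F] [DecidableEq F] {n' d : ℕ}
    (C : Submodule F (Fin n' → F))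
    (hd_le : ∀ x ∈ C, x ≠ 0 → d ≤ hammingNorm x) :
    (Fintype.card F : ℤ) ^ (Module.finrank F C) *
        ((Fintype.card F : ℤ) * d - ((Fintype.card F : ℤ) - 1) * n') ≤
      (Fintype.card F : ℤ) * d := by
  classical
  have hcard : Fintype.card C.toAddSubgroup = Fintype.card F ^ Module.finrank F C :=
    (Fintype.card_congr (Equiv.refl C)).trans Module.card_eq_pow_finrank
  simpa only [hcard, Fintype.card_fin, Nat.cast_pow] using C.toAddSubgroup.plotkin_bound hd_le

/-- Plotkin bound: a linear code `C ⊆ F_q^{n'}` of dimension `k'` and minimum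
distance `d` with `d > (1 − 1/q)n'` satisfies `q^{k'}(qd − (q−1)n') ≤ qd`. -/
theorem stmt_16 {F : Type*} [Field F] [Fintype F] [DecidableEq F] {n' d : ℕ}
    (C : Submodule F (Fin n' → F))
    (hd_le : ∀ x ∈ C, x ≠ 0 → d ≤ hammingNorm x)
    (hd_eq : ∃ x ∈ C, x ≠ 0 ∧ hammingNorm x = d)
    (hplot : ((Fintype.card F : ℤ) - 1) * n' < (Fintype.card F : ℤ) * d) :
    (Fintype.card F : ℤ) ^ (Module.finrank F C) *
        ((Fintype.card F : ℤ) * d - ((Fintype.card F : ℤ) - 1) * n') ≤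
      (Fintype.card F : ℤ) * d :=
  stmt_16_general C hd_le
end
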